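/- Let t > 0, δ ∈ (0,1), and define r : (ℂ∖{0}) × ℂ → ℝ by r(z,w) = t − Re((w + i·c)·exp(−i·(δπ/2 + (1−δ)·ln(|z|²)))) where c = sin(δπ/(2(1−δ))). Then at every point (z,w) with r(z,w) = 0, the Levi form of r evaluated at the complex tangent vector (−∂r/∂w, ∂r/∂z) equals ((1−δ)²/(4|z|²))·t, which is strictly positive. -/

import Mathlib

open Complex

noncomputable section

/-- Wirtinger derivative `∂f/∂z₁` for `f : ℂ × ℂ → ℂ` (real-differentiable). -/
def wderiv1 (f : ℂ × ℂ → ℂ) (p : ℂ × ℂ) : ℂ :=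
  (fderiv ℝ f p (1, 0) - Complex.I * fderiv ℝ f p (Complex.I, 0)) / 2

/-- Wirtinger derivative `∂f/∂z̄₁`. -/
def wderivBar1 (f : ℂ × ℂ → ℂ) (p : ℂ × ℂ) : ℂ :=
  (fderiv ℝ f p (1, 0) + Complex.I * fderiv ℝ f p (Complex.I, 0)) / 2

/-- Wirtinger derivative `∂f/∂z₂`. -/
def wderiv2 (f : ℂ × ℂ → ℂ) (p : ℂ × ℂ) : ℂ :=
  (fderiv ℝ f p (0, 1) - Complex.I * fderiv ℝ f p (0, Complex.I)) / 2

/-- Wirtinger derivative `∂f/∂z̄₂`. -/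
def wderivBar2 (f : ℂ × ℂ → ℂ) (p : ℂ × ℂ) : ℂ :=
  (fderiv ℝ f p (0, 1) + Complex.I * fderiv ℝ f p (0, Complex.I)) / 2

/-- The Levi form `∑_{j,k} ∂²f/∂z_j∂z̄_k (p) v_j conj v_k` of `f` at `p`
applied to the vector `v ∈ ℂ²`. -/
def leviForm (f : ℂ × ℂ → ℂ) (p v : ℂ × ℂ) : ℂ :=
  wderiv1 (wderivBar1 f) p * v.1 * starRingEnd ℂ v.1 +
    wderiv1 (wderivBar2 f) p * v.1 * starRingEnd ℂ v.2 +
    wderiv2 (wderivBar1 f) p * v.2 * starRingEnd ℂ v.1 +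
    wderiv2 (wderivBar2 f) p * v.2 * starRingEnd ℂ v.2

noncomputable section Aux

/-- conjugation as a real-CLM -/
def cjL : ℂ →L[ℝ] ℂ := Complex.conjCLE.toContinuousLinearMap

@[simp] lemma cjL_apply (u : ℂ) : cjL u = starRingEnd ℂ u := rfl

def epsF (a b : ℝ) (z : ℂ) : ℂ :=
  Complex.exp (-Complex.I * ((a + b * Real.log (‖z‖ ^ 2) : ℝ) : ℂ))

lemma epsF_mul_conj (a b : ℝ) (z : ℂ) : epsF a b z * starRingEnd ℂ (epsF a b z) = 1 := by
  rw [epsF, ← Complex.exp_conj, ← Complex.exp_add]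
  simp only [map_mul, map_neg, Complex.conj_I, Complex.conj_ofReal]
  ring_nf
  exact Complex.exp_zero

/-- derivative of `z ↦ ↑(log |z|²)` -/
lemma hasFDerivAt_clog2 {z : ℂ} (hz : z ≠ 0) :
    HasFDerivAt (fun z : ℂ => ((Real.log (‖z‖ ^ 2) : ℝ) : ℂ))
      (z⁻¹ • ContinuousLinearMap.id ℝ ℂ + (starRingEnd ℂ z)⁻¹ • cjL) z := by
  have hre : HasFDerivAt (fun z : ℂ => z.re) Complex.reCLM z := Complex.reCLM.hasFDerivAt
  have him : HasFDerivAt (fun z : ℂ => z.im) Complex.imCLM z := Complex.imCLM.hasFDerivAt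
  have hns : HasFDerivAt (fun z : ℂ => Complex.normSq z)
      ((z.re • Complex.reCLM + z.re • Complex.reCLM) +
        (z.im • Complex.imCLM + z.im • Complex.imCLM)) z := by
    have := (hre.mul hre).add (him.mul him)
    exact this
  have hnz : Complex.normSq z ≠ 0 := by simpa [Complex.normSq_eq_zero] using hz
  have hlog := hns.log hnz
  have habs : (fun z : ℂ => Real.log (‖z‖ ^ 2)) =
      fun z : ℂ => Real.log (Complex.normSq z) := by
    funext x; rw [Complex.sq_norm]
  have hcast := Complex.ofRealCLM.hasFDerivAt.comp z hlog
  rw [← habs] at hcast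
  refine hcast.congr_fderiv (Eq.symm ?_)
  ext u
  have hcz : starRingEnd ℂ z ≠ 0 := by simpa using hz
  simp only [ContinuousLinearMap.add_apply, ContinuousLinearMap.coe_comp',
    Function.comp_apply, ContinuousLinearMap.coe_smul', Pi.smul_apply,
    ContinuousLinearMap.id_apply, cjL_apply, Complex.ofRealCLM_apply,
    ContinuousLinearMap.smul_apply, Complex.reCLM_apply, Complex.imCLM_apply,
    smul_eq_mul]
  rw [Complex.ofReal_mul]
  have h1 : z⁻¹ * u + (starRingEnd ℂ z)⁻¹ * starRingEnd ℂ u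
      = (u * starRingEnd ℂ z + starRingEnd ℂ (u * starRingEnd ℂ z)) / (z * starRingEnd ℂ z) := by
    field_simp
    simp [mul_comm]
  rw [h1, Complex.add_conj, Complex.mul_conj]
  have : (u * starRingEnd ℂ z).re = z.re * u.re + z.im * u.im := by
    simp [Complex.mul_re]; ring
  rw [this]
  push_cast
  field_simp
  ring

end Aux

noncomputable section Aux2

def DepsF (a b : ℝ) (z : ℂ) : ℂ →L[ℝ] ℂ :=
  (epsF a b z * (-Complex.I * b)) •
    (z⁻¹ • ContinuousLinearMap.id ℝ ℂ + (starRingEnd ℂ z)⁻¹ • cjL)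

lemma hasFDerivAt_epsF (a b : ℝ) {z : ℂ} (hz : z ≠ 0) :
    HasFDerivAt (epsF a b) (DepsF a b z) z := by
  have heq : epsF a b = fun z : ℂ =>
      Complex.exp (-Complex.I * ((a : ℂ) + (b : ℂ) * ((Real.log (‖z‖ ^ 2) : ℝ) : ℂ))) := by
    funext x; rw [epsF]; push_cast; ring_nf
  have hinner : HasFDerivAt
      (fun z : ℂ => -Complex.I * ((a : ℂ) + (b : ℂ) * ((Real.log (‖z‖ ^ 2) : ℝ) : ℂ)))
      ((-Complex.I) • ((b : ℂ) • (z⁻¹ • ContinuousLinearMap.id ℝ ℂ + (starRingEnd ℂ z)⁻¹ • cjL))) z := by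
    exact (((hasFDerivAt_clog2 hz).const_mul (b : ℂ)).const_add (a : ℂ)).const_mul (-Complex.I)
  have := hinner.cexp
  rw [heq]
  refine this.congr_fderiv (Eq.symm ?_)
  rw [DepsF, smul_smul, smul_smul]
  congr 1
  rw [epsF]; push_cast; ring_nf

end Aux2

noncomputable section Aux3

variable (a b : ℝ) (γ : ℂ)

def gF (p : ℂ × ℂ) : ℂ := (p.2 + γ) * epsF a b p.1

def DgF (p : ℂ × ℂ) : (ℂ × ℂ) →L[ℝ] ℂ :=
  (p.2 + γ) • ((DepsF a b p.1).comp (ContinuousLinearMap.fst ℝ ℂ ℂ)) +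
    epsF a b p.1 • (ContinuousLinearMap.snd ℝ ℂ ℂ)

lemma DgF_apply (p u : ℂ × ℂ) :
    DgF a b γ p u = (p.2 + γ) * (epsF a b p.1 * (-Complex.I * b) *
      (p.1⁻¹ * u.1 + (starRingEnd ℂ p.1)⁻¹ * starRingEnd ℂ u.1)) + epsF a b p.1 * u.2 := by
  simp [DgF, DepsF, ContinuousLinearMap.smul_apply, smul_eq_mul]
  ring

lemma hasFDerivAt_gF {p : ℂ × ℂ} (hz : p.1 ≠ 0) :
    HasFDerivAt (gF a b γ) (DgF a b γ p) p := by
  have hc : HasFDerivAt (fun p : ℂ × ℂ => p.2 + γ) (ContinuousLinearMap.snd ℝ ℂ ℂ) p :=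
    hasFDerivAt_snd.add_const γ
  have hd : HasFDerivAt (fun p : ℂ × ℂ => epsF a b p.1)
      ((DepsF a b p.1).comp (ContinuousLinearMap.fst ℝ ℂ ℂ)) p :=
    (hasFDerivAt_epsF a b hz).comp p hasFDerivAt_fst
  exact hc.mul hd

lemma hasFDerivAt_conj_gF {p : ℂ × ℂ} (hz : p.1 ≠ 0) :
    HasFDerivAt (fun p : ℂ × ℂ => starRingEnd ℂ (gF a b γ p)) (cjL.comp (DgF a b γ p)) p :=
  cjL.hasFDerivAt.comp p (hasFDerivAt_gF a b γ hz)

def fF (t : ℝ) (p : ℂ × ℂ) : ℂ :=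
  (t : ℂ) - (2 : ℂ)⁻¹ * (gF a b γ p + starRingEnd ℂ (gF a b γ p))

def DfF (p : ℂ × ℂ) : (ℂ × ℂ) →L[ℝ] ℂ :=
  -((2 : ℂ)⁻¹ • (DgF a b γ p + cjL.comp (DgF a b γ p)))

lemma hasFDerivAt_fF (t : ℝ) {p : ℂ × ℂ} (hz : p.1 ≠ 0) :
    HasFDerivAt (fF a b γ t) (DfF a b γ p) p := by
  have h := (((hasFDerivAt_gF a b γ hz).add (hasFDerivAt_conj_gF a b γ hz)).const_mul
    ((2 : ℂ)⁻¹)).const_sub (t : ℂ)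
  exact h

end Aux3

noncomputable section Aux4

variable (a b : ℝ) (γ : ℂ)

variable (t : ℝ)

lemma wderiv2_fF {p : ℂ × ℂ} (hz : p.1 ≠ 0) :
    wderiv2 (fF a b γ t) p = -(epsF a b p.1) / 2 := by
  rw [wderiv2, (hasFDerivAt_fF a b γ t hz).fderiv]
  simp only [DfF, ContinuousLinearMap.neg_apply, ContinuousLinearMap.smul_apply,
    ContinuousLinearMap.add_apply, ContinuousLinearMap.coe_comp', Function.comp_apply,
    cjL_apply, DgF_apply, smul_eq_mul]
  simp only [map_add, map_mul, map_inv₀, Complex.conj_conj, Complex.conj_I, map_neg,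
    Complex.conj_ofReal, map_one, map_zero]
  ring_nf
  simp only [Complex.I_sq]
  ring

end Aux4

noncomputable section Aux5

variable (a b : ℝ) (γ : ℂ) (t : ℝ)

lemma wderiv1_fF {p : ℂ × ℂ} (hz : p.1 ≠ 0) :
    wderiv1 (fF a b γ t) p =
      Complex.I * b * (gF a b γ p - starRingEnd ℂ (gF a b γ p)) / 2 * p.1⁻¹ := by
  rw [wderiv1, (hasFDerivAt_fF a b γ t hz).fderiv]
  simp only [DfF, ContinuousLinearMap.neg_apply, ContinuousLinearMap.smul_apply,
    ContinuousLinearMap.add_apply, ContinuousLinearMap.coe_comp', Function.comp_apply,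
    cjL_apply, DgF_apply, smul_eq_mul]
  simp only [map_add, map_mul, map_inv₀, Complex.conj_conj, Complex.conj_I, map_neg,
    Complex.conj_ofReal, map_one, map_zero, gF]
  have h3 : Complex.I ^ 3 = -Complex.I := by rw [pow_succ, Complex.I_sq]; ring
  have h4 : Complex.I ^ 4 = 1 := by rw [pow_succ, h3]; simp [Complex.I_mul_I]
  ring_nf
  simp only [Complex.I_sq, h3, h4]
  ring

lemma wderivBar1_fF {p : ℂ × ℂ} (hz : p.1 ≠ 0) :
    wderivBar1 (fF a b γ t) p =
      Complex.I * b * (gF a b γ p - starRingEnd ℂ (gF a b γ p)) / 2 * (starRingEnd ℂ p.1)⁻¹ := by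
  rw [wderivBar1, (hasFDerivAt_fF a b γ t hz).fderiv]
  simp only [DfF, ContinuousLinearMap.neg_apply, ContinuousLinearMap.smul_apply,
    ContinuousLinearMap.add_apply, ContinuousLinearMap.coe_comp', Function.comp_apply,
    cjL_apply, DgF_apply, smul_eq_mul]
  simp only [map_add, map_mul, map_inv₀, Complex.conj_conj, Complex.conj_I, map_neg,
    Complex.conj_ofReal, map_one, map_zero, gF]
  have h3 : Complex.I ^ 3 = -Complex.I := by rw [pow_succ, Complex.I_sq]; ring
  have h4 : Complex.I ^ 4 = 1 := by rw [pow_succ, h3]; simp [Complex.I_mul_I]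
  ring_nf
  simp only [Complex.I_sq, h3, h4]
  ring

lemma wderivBar2_fF {p : ℂ × ℂ} (hz : p.1 ≠ 0) :
    wderivBar2 (fF a b γ t) p = -(starRingEnd ℂ (epsF a b p.1)) / 2 := by
  rw [wderivBar2, (hasFDerivAt_fF a b γ t hz).fderiv]
  simp only [DfF, ContinuousLinearMap.neg_apply, ContinuousLinearMap.smul_apply,
    ContinuousLinearMap.add_apply, ContinuousLinearMap.coe_comp', Function.comp_apply,
    cjL_apply, DgF_apply, smul_eq_mul]
  simp only [map_add, map_mul, map_inv₀, Complex.conj_conj, Complex.conj_I, map_neg,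
    Complex.conj_ofReal, map_one, map_zero]
  ring_nf
  simp only [Complex.I_sq]
  ring

end Aux5

noncomputable section Aux6

variable (a b : ℝ) (γ : ℂ)

def AF (p : ℂ × ℂ) : ℂ :=
  (Complex.I * b / 2) * ((gF a b γ p - starRingEnd ℂ (gF a b γ p)) * (starRingEnd ℂ p.1)⁻¹)

def BF (p : ℂ × ℂ) : ℂ := -(2 : ℂ)⁻¹ * starRingEnd ℂ (epsF a b p.1)

def DinvC (p : ℂ × ℂ) : (ℂ × ℂ) →L[ℝ] ℂ :=
  ((ContinuousLinearMap.smulRight (1 : ℂ →L[ℂ] ℂ)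
      (-((starRingEnd ℂ p.1) ^ 2)⁻¹)).restrictScalars ℝ).comp
    (cjL.comp (ContinuousLinearMap.fst ℝ ℂ ℂ))

lemma DinvC_apply (p u : ℂ × ℂ) :
    DinvC p u = starRingEnd ℂ u.1 * (-((starRingEnd ℂ p.1) ^ 2)⁻¹) := by
  simp [DinvC]

lemma hasFDerivAt_invC {p : ℂ × ℂ} (hz : p.1 ≠ 0) :
    HasFDerivAt (fun p : ℂ × ℂ => (starRingEnd ℂ p.1)⁻¹) (DinvC p) p := by
  have hcz : starRingEnd ℂ p.1 ≠ 0 := by simpa using hz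
  have hcf : HasFDerivAt (fun p : ℂ × ℂ => starRingEnd ℂ p.1)
      (cjL.comp (ContinuousLinearMap.fst ℝ ℂ ℂ)) p :=
    cjL.hasFDerivAt.comp p hasFDerivAt_fst
  have hi : HasFDerivAt (fun y : ℂ => y⁻¹)
      (((ContinuousLinearMap.smulRight (1 : ℂ →L[ℂ] ℂ)
        (-((starRingEnd ℂ p.1) ^ 2)⁻¹)).restrictScalars ℝ)) (starRingEnd ℂ p.1) :=
    ((hasDerivAt_inv hcz).hasFDerivAt).restrictScalars ℝ
  exact hi.comp p hcf

def DAF (p : ℂ × ℂ) : (ℂ × ℂ) →L[ℝ] ℂ :=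
  (Complex.I * b / 2) • ((gF a b γ p - starRingEnd ℂ (gF a b γ p)) • DinvC p +
    (starRingEnd ℂ p.1)⁻¹ • (DgF a b γ p - cjL.comp (DgF a b γ p)))

lemma hasFDerivAt_AF {p : ℂ × ℂ} (hz : p.1 ≠ 0) :
    HasFDerivAt (AF a b γ) (DAF a b γ p) p :=
  (((hasFDerivAt_gF a b γ hz).sub (hasFDerivAt_conj_gF a b γ hz)).mul
    (hasFDerivAt_invC hz)).const_mul _

def DBF (p : ℂ × ℂ) : (ℂ × ℂ) →L[ℝ] ℂ :=
  (-(2 : ℂ)⁻¹) • (cjL.comp ((DepsF a b p.1).comp (ContinuousLinearMap.fst ℝ ℂ ℂ)))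

lemma hasFDerivAt_BF {p : ℂ × ℂ} (hz : p.1 ≠ 0) :
    HasFDerivAt (BF a b) (DBF a b p) p :=
  (cjL.hasFDerivAt.comp p
    ((hasFDerivAt_epsF a b hz).comp p hasFDerivAt_fst)).const_mul _

end Aux6

noncomputable section Aux7

variable (a b : ℝ) (γ : ℂ)

lemma wderiv1_AF {p : ℂ × ℂ} (hz : p.1 ≠ 0) :
    wderiv1 (AF a b γ) p =
      (b : ℂ) ^ 2 * (gF a b γ p + starRingEnd ℂ (gF a b γ p)) / 2 *
        (p.1⁻¹ * (starRingEnd ℂ p.1)⁻¹) := by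
  rw [wderiv1, (hasFDerivAt_AF a b γ hz).fderiv]
  simp only [DAF, ContinuousLinearMap.smul_apply, ContinuousLinearMap.add_apply,
    ContinuousLinearMap.sub_apply, ContinuousLinearMap.coe_comp', Function.comp_apply,
    cjL_apply, DgF_apply, DinvC_apply, smul_eq_mul]
  simp only [map_add, map_mul, map_inv₀, Complex.conj_conj, Complex.conj_I, map_neg,
    Complex.conj_ofReal, map_one, map_zero, gF]
  have h3 : Complex.I ^ 3 = -Complex.I := by rw [pow_succ, Complex.I_sq]; ring
  have h4 : Complex.I ^ 4 = 1 := by rw [pow_succ, h3]; simp [Complex.I_mul_I]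
  ring_nf
  simp only [Complex.I_sq, h3, h4]
  ring

lemma wderiv2_AF {p : ℂ × ℂ} (hz : p.1 ≠ 0) :
    wderiv2 (AF a b γ) p =
      Complex.I * b * epsF a b p.1 / 2 * (starRingEnd ℂ p.1)⁻¹ := by
  rw [wderiv2, (hasFDerivAt_AF a b γ hz).fderiv]
  simp only [DAF, ContinuousLinearMap.smul_apply, ContinuousLinearMap.add_apply,
    ContinuousLinearMap.sub_apply, ContinuousLinearMap.coe_comp', Function.comp_apply,
    cjL_apply, DgF_apply, DinvC_apply, smul_eq_mul]
  simp only [map_add, map_mul, map_inv₀, Complex.conj_conj, Complex.conj_I, map_neg,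
    Complex.conj_ofReal, map_one, map_zero, gF]
  have h3 : Complex.I ^ 3 = -Complex.I := by rw [pow_succ, Complex.I_sq]; ring
  have h4 : Complex.I ^ 4 = 1 := by rw [pow_succ, h3]; simp [Complex.I_mul_I]
  ring_nf
  simp only [Complex.I_sq, h3, h4]
  ring

lemma wderiv1_BF {p : ℂ × ℂ} (hz : p.1 ≠ 0) :
    wderiv1 (BF a b) p =
      -(Complex.I * b * starRingEnd ℂ (epsF a b p.1)) / 2 * p.1⁻¹ := by
  rw [wderiv1, (hasFDerivAt_BF a b hz).fderiv]
  simp only [DBF, DepsF, ContinuousLinearMap.smul_apply, ContinuousLinearMap.add_apply,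
    ContinuousLinearMap.coe_comp', Function.comp_apply, cjL_apply,
    ContinuousLinearMap.coe_fst', ContinuousLinearMap.id_apply, smul_eq_mul]
  simp only [map_add, map_mul, map_inv₀, Complex.conj_conj, Complex.conj_I, map_neg,
    Complex.conj_ofReal, map_one, map_zero]
  have h3 : Complex.I ^ 3 = -Complex.I := by rw [pow_succ, Complex.I_sq]; ring
  have h4 : Complex.I ^ 4 = 1 := by rw [pow_succ, h3]; simp [Complex.I_mul_I]
  ring_nf
  simp only [Complex.I_sq, h3, h4]
  ring

lemma wderiv2_BF {p : ℂ × ℂ} (hz : p.1 ≠ 0) :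
    wderiv2 (BF a b) p = 0 := by
  rw [wderiv2, (hasFDerivAt_BF a b hz).fderiv]
  simp only [DBF, DepsF, ContinuousLinearMap.smul_apply, ContinuousLinearMap.add_apply,
    ContinuousLinearMap.coe_comp', Function.comp_apply, cjL_apply,
    ContinuousLinearMap.coe_fst', ContinuousLinearMap.id_apply, smul_eq_mul]
  simp only [map_add, map_mul, map_inv₀, Complex.conj_conj, Complex.conj_I, map_neg,
    Complex.conj_ofReal, map_one, map_zero]
  ring_nf

end Aux7

theorem stmt_16 (t δ : ℝ) (ht : 0 < t) (hδ0 : 0 < δ) (hδ1 : δ < 1)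
    (r : ℂ × ℂ → ℝ)
    (hr : r = fun p =>
      t - ((p.2 + Complex.I * (Real.sin (δ * Real.pi / (2 * (1 - δ))) : ℂ)) *
            Complex.exp (-Complex.I *
              ((δ * Real.pi / 2 + (1 - δ) * Real.log (‖p.1‖ ^ 2) : ℝ) : ℂ))).re)
    (f : ℂ × ℂ → ℂ) (hf : f = fun p => (r p : ℂ))
    (z w : ℂ) (hz : z ≠ 0) (hbd : r (z, w) = 0) :
    leviForm f (z, w) (-(wderiv2 f (z, w)), wderiv1 f (z, w)) =
      (((1 - δ) ^ 2 / (4 * ‖z‖ ^ 2) * t : ℝ) : ℂ) ∧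
    0 < (1 - δ) ^ 2 / (4 * ‖z‖ ^ 2) * t := by
  have hb0 : (0:ℝ) < 1 - δ := by linarith
  have habs : 0 < ‖z‖ := by
    exact norm_pos_iff.mpr hz
  refine ⟨?_, by positivity⟩
  set a : ℝ := δ * Real.pi / 2 with ha
  set b : ℝ := 1 - δ with hbdef
  set γ : ℂ := Complex.I * ((Real.sin (δ * Real.pi / (2 * (1 - δ))) : ℝ) : ℂ) with hγ
  have hfeq : f = fF a b γ t := by
    funext q
    rw [hf, hr, fF, gF, epsF]
    rw [Complex.add_conj]
    push_cast
    ring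
  have hp1 : ((z, w) : ℂ × ℂ).1 ≠ 0 := hz
  have hcz : starRingEnd ℂ z ≠ 0 := by simpa using hz
  have hbd' : gF a b γ (z, w) + starRingEnd ℂ (gF a b γ (z, w)) = 2 * (t : ℂ) := by
    rw [hr] at hbd
    have : (gF a b γ (z, w)).re = t := by
      simp only [gF, epsF] at *
      linarith [hbd]
    rw [Complex.add_conj, this]
    push_cast
    ring
  have hopen : IsOpen {q : ℂ × ℂ | q.1 ≠ 0} := isOpen_ne.preimage continuous_fst
  have hmem : {q : ℂ × ℂ | q.1 ≠ 0} ∈ nhds ((z, w) : ℂ × ℂ) := hopen.mem_nhds hz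
  have hevA : (fun q => wderivBar1 f q) =ᶠ[nhds ((z, w) : ℂ × ℂ)] AF a b γ := by
    refine Filter.eventuallyEq_of_mem hmem (fun q hq => ?_)
    rw [hfeq, wderivBar1_fF a b γ t hq, AF]
    ring
  have hevB : (fun q => wderivBar2 f q) =ᶠ[nhds ((z, w) : ℂ × ℂ)] BF a b := by
    refine Filter.eventuallyEq_of_mem hmem (fun q hq => ?_)
    rw [hfeq, wderivBar2_fF a b γ t hq, BF]
    ring
  have h11 : wderiv1 (wderivBar1 f) (z, w) = wderiv1 (AF a b γ) (z, w) := by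
    unfold wderiv1; rw [hevA.fderiv_eq]
  have h21 : wderiv2 (wderivBar1 f) (z, w) = wderiv2 (AF a b γ) (z, w) := by
    unfold wderiv2; rw [hevA.fderiv_eq]
  have h12 : wderiv1 (wderivBar2 f) (z, w) = wderiv1 (BF a b) (z, w) := by
    unfold wderiv1; rw [hevB.fderiv_eq]
  have h22 : wderiv2 (wderivBar2 f) (z, w) = wderiv2 (BF a b) (z, w) := by
    unfold wderiv2; rw [hevB.fderiv_eq]
  have hA1 : wderiv1 (AF a b γ) (z, w) = (b : ℂ) ^ 2 * (t : ℂ) * (z⁻¹ * (starRingEnd ℂ z)⁻¹) := by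
    rw [wderiv1_AF a b γ hp1]
    have : gF a b γ (z, w) + starRingEnd ℂ (gF a b γ (z, w)) = 2 * (t : ℂ) := hbd'
    rw [this]
    ring
  have hA2 := wderiv2_AF a b γ hp1
  have hB1 := wderiv1_BF a b hp1
  have hB2 := wderiv2_BF a b hp1
  have hv1 : wderiv2 f ((z, w) : ℂ × ℂ) = -(epsF a b z) / 2 := by
    rw [hfeq]; exact wderiv2_fF a b γ t hp1
  have hv2 : wderiv1 f ((z, w) : ℂ × ℂ) =
      Complex.I * b * (gF a b γ (z, w) - starRingEnd ℂ (gF a b γ (z, w))) / 2 * z⁻¹ := by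
    rw [hfeq]; exact wderiv1_fF a b γ t hp1
  have hEE := epsF_mul_conj a b z
  rw [leviForm, h11, h21, h12, h22, hA1, hA2, hB1, hB2, hv1, hv2]
  push_cast
  rw [show ((‖z‖ : ℝ) : ℂ) ^ 2 = z * starRingEnd ℂ z from by
    rw [← Complex.ofReal_pow, Complex.sq_norm]; exact (Complex.mul_conj z).symm]
  simp only [map_neg, map_div₀, map_mul, map_sub, map_inv₀, map_ofNat, Complex.conj_conj,
    Complex.conj_I, Complex.conj_ofReal]
  linear_combination ((b : ℂ) ^ 2 * (t : ℂ) * z⁻¹ * ((starRingEnd ℂ) z)⁻¹ / 4) * hEE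

end
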